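/- If α and β are computable positive probability measures on Σ and S ∈ FREQ^α, then dim^β(S) = dim(S)/(H_k(α) + D_k(α‖β)) and Dim^β(S) = Dim(S)/(H_k(α) + D_k(α‖β)), where dim^β(S) = liminf_{w→S} K(w)/I_β(w), Dim^β(S) = limsup_{w→S} K(w)/I_β(w), dim(S) = liminf_{w→S} K(w)/(|w| log k), Dim(S) = limsup_{w→S} K(w)/(|w| log k), and K is prefix-free Kolmogorov complexity. -/

import Mathlib

/-!
Since `S` has asymptotic symbol frequencies `α`, the self-information of its prefixes grows like
`n · Σ α(a) log(1/β(a)) = n (H(α) + D(α‖β))`. Hence `K(w)/I_β(w)` is `K(w)/(|w| log k)` times a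
factor tending to the positive finite constant `log k / (H(α) + D(α‖β))`, and multiplication by
such a factor commutes with `liminf` and `limsup` in `ℝ≥0∞`.
-/

open Filter

/-- The length-`n` prefix of the sequence `S`. -/
def pref {k : ℕ} (S : ℕ → Fin k) (n : ℕ) : List (Fin k) := (List.range n).map S

/-- Self-information `I_β(w) = Σ_{i<|w|} log(1/β(w[i]))` (base-2 logs). -/
noncomputable def selfInfo {k : ℕ} (β : Fin k → ℝ) (w : List (Fin k)) : ℝ :=
  (w.map fun a => Real.logb 2 (β a)⁻¹).sum

/-- A real-valued function on `Fin k` is computable if it has a uniformly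
computable rational approximation to within `2^{-r}`. -/
def ComputableMeasure {k : ℕ} (α : Fin k → ℝ) : Prop :=
  ∃ f : Fin k → ℕ → ℚ, Computable₂ f ∧ ∀ a r, |(f a r : ℝ) - α a| ≤ (2 : ℝ) ^ (-(r : ℝ))

open Topology

namespace ENNReal

variable {ι : Type*} {f : Filter ι} [f.NeBot] {u v : ι → ℝ≥0∞} {M : ℝ≥0∞}

theorem liminf_mul_of_tendsto (hM0 : M ≠ 0) (hMtop : M ≠ ∞) (hv : Tendsto v f (𝓝 M)) :
    liminf (u * v) f = liminf u f * M := by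
  refine le_antisymm ?_ (hv.liminf_eq ▸ le_liminf_mul)
  calc liminf (u * v) f = liminf (v * u) f := by rw [mul_comm]
    _ ≤ limsup v f * liminf u f :=
      liminf_mul_le (Or.inl (hv.limsup_eq ▸ hM0)) (Or.inl (hv.limsup_eq ▸ hMtop))
    _ = liminf u f * M := by rw [hv.limsup_eq, mul_comm]

theorem limsup_mul_of_tendsto (hM0 : M ≠ 0) (hMtop : M ≠ ∞) (hv : Tendsto v f (𝓝 M)) :
    limsup (u * v) f = limsup u f * M :=
  le_antisymm
    (hv.limsup_eq ▸ limsup_mul_le' (Or.inr (hv.limsup_eq ▸ hMtop)) (Or.inr (hv.limsup_eq ▸ hM0)))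
    (hv.liminf_eq ▸ le_limsup_mul)

end ENNReal

section ChangeOfDenominator

variable {ι : Type*} {f : Filter ι} {x y z : ι → ℝ} {c : ℝ}

lemma eventuallyEq_ofReal_div_mul (hc : 0 < c) (hy : ∀ᶠ i in f, 0 < y i)
    (hzy : Tendsto (fun i => z i / y i) f (𝓝 c)) :
    (fun i => ENNReal.ofReal (x i / z i)) =ᶠ[f]
      (fun i => ENNReal.ofReal (x i / y i)) * fun i => ENNReal.ofReal (y i / z i) := by
  filter_upwards [hy, hzy.eventually (lt_mem_nhds hc)] with i hyi hzyi
  have hzi : 0 < z i := by simpa [hyi] using (div_pos_iff_of_pos_right hyi).mp hzyi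
  rw [Pi.mul_apply, ← ENNReal.ofReal_mul' (div_pos hyi hzi).le, div_mul_div_cancel₀ hyi.ne']

lemma tendsto_ofReal_div_of_tendsto_div (hc : 0 < c) (hzy : Tendsto (fun i => z i / y i) f (𝓝 c)) :
    Tendsto (fun i => ENNReal.ofReal (y i / z i)) f (𝓝 (ENNReal.ofReal c)⁻¹) := by
  rw [← ENNReal.ofReal_inv_of_pos hc]
  simpa only [Pi.inv_apply, inv_div] using ENNReal.tendsto_ofReal (hzy.inv₀ hc.ne')

variable [f.NeBot]

theorem liminf_ofReal_div_eq_div_of_tendsto (hc : 0 < c) (hy : ∀ᶠ i in f, 0 < y i)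
    (hzy : Tendsto (fun i => z i / y i) f (𝓝 c)) :
    liminf (fun i => ENNReal.ofReal (x i / z i)) f =
      liminf (fun i => ENNReal.ofReal (x i / y i)) f / ENNReal.ofReal c := by
  rw [liminf_congr (eventuallyEq_ofReal_div_mul hc hy hzy),
    ENNReal.liminf_mul_of_tendsto (ENNReal.inv_ne_zero.mpr ENNReal.ofReal_ne_top)
      (ENNReal.inv_ne_top.mpr (ENNReal.ofReal_pos.mpr hc).ne')
      (tendsto_ofReal_div_of_tendsto_div hc hzy), div_eq_mul_inv]

theorem limsup_ofReal_div_eq_div_of_tendsto (hc : 0 < c) (hy : ∀ᶠ i in f, 0 < y i)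
    (hzy : Tendsto (fun i => z i / y i) f (𝓝 c)) :
    limsup (fun i => ENNReal.ofReal (x i / z i)) f =
      limsup (fun i => ENNReal.ofReal (x i / y i)) f / ENNReal.ofReal c := by
  rw [limsup_congr (eventuallyEq_ofReal_div_mul hc hy hzy),
    ENNReal.limsup_mul_of_tendsto (ENNReal.inv_ne_zero.mpr ENNReal.ofReal_ne_top)
      (ENNReal.inv_ne_top.mpr (ENNReal.ofReal_pos.mpr hc).ne')
      (tendsto_ofReal_div_of_tendsto_div hc hzy), div_eq_mul_inv]

end ChangeOfDenominator

lemma Finset.sum_list_map_count_eq_sum_univ {ι M : Type*} [Fintype ι] [DecidableEq ι]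
    [AddCommMonoid M] (l : List ι) (g : ι → M) :
    (l.map g).sum = ∑ a, l.count a • g a := by
  rw [Finset.sum_list_map_count]
  refine Finset.sum_subset (Finset.subset_univ _) fun a _ ha => ?_
  rw [List.count_eq_zero_of_not_mem (by simpa using ha), zero_smul]

lemma lt_one_of_sum_eq_one {ι : Type*} [Fintype ι] [Nontrivial ι] {β : ι → ℝ}
    (hβpos : ∀ a, 0 < β a) (hβ1 : ∑ a, β a = 1) (a : ι) : β a < 1 := by
  obtain ⟨b, hba⟩ := exists_ne a
  exact hβ1 ▸ Finset.single_lt_sum hba (Finset.mem_univ a) (Finset.mem_univ b) (hβpos b)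
    fun x _ _ => (hβpos x).le

lemma sum_mul_logb_inv_pos {ι : Type*} [Fintype ι] [Nonempty ι] {α β : ι → ℝ}
    (hαpos : ∀ a, 0 < α a) (hβpos : ∀ a, 0 < β a) (hβlt : ∀ a, β a < 1) :
    0 < ∑ a, α a * Real.logb 2 (β a)⁻¹ :=
  Finset.sum_pos (fun a _ => mul_pos (hαpos a)
    (Real.logb_pos one_lt_two ((one_lt_inv₀ (hβpos a)).mpr (hβlt a)))) Finset.univ_nonempty

lemma sum_mul_logb_inv_add_sum_mul_logb_div {ι : Type*} [Fintype ι] {α β : ι → ℝ}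
    (hα : ∀ a, α a ≠ 0) (hβ : ∀ a, β a ≠ 0) :
    ∑ a, α a * Real.logb 2 (α a)⁻¹ + ∑ a, α a * Real.logb 2 (α a / β a) =
      ∑ a, α a * Real.logb 2 (β a)⁻¹ := by
  rw [← Finset.sum_add_distrib]
  refine Finset.sum_congr rfl fun a _ => ?_
  rw [Real.logb_inv, Real.logb_div (hα a) (hβ a), Real.logb_inv]
  ring

lemma selfInfo_eq_sum_count {k : ℕ} (β : Fin k → ℝ) (w : List (Fin k)) :
    selfInfo β w = ∑ a, (w.count a : ℝ) * Real.logb 2 (β a)⁻¹ := by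
  simp only [selfInfo, Finset.sum_list_map_count_eq_sum_univ, nsmul_eq_mul]

lemma tendsto_selfInfo_pref_div {k : ℕ} {α : Fin k → ℝ} (β : Fin k → ℝ) {S : ℕ → Fin k}
    (hfreq : ∀ a, Tendsto (fun n : ℕ => ((pref S n).count a : ℝ) / n) atTop (𝓝 (α a))) :
    Tendsto (fun n : ℕ => selfInfo β (pref S n) / n) atTop
      (𝓝 (∑ a, α a * Real.logb 2 (β a)⁻¹)) := by
  simp only [selfInfo_eq_sum_count, Finset.sum_div, mul_div_right_comm]
  exact tendsto_finsetSum _ fun a _ => (hfreq a).mul_const _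

theorem constructive_dimension_freq_formula_general
    (k : ℕ) (hk : 2 ≤ k)
    (α β : Fin k → ℝ) (hαpos : ∀ a, 0 < α a) (hβpos : ∀ a, 0 < β a)
    (hβ1 : ∑ a, β a = 1)
    (S : ℕ → Fin k)
    (hfreq : ∀ a : Fin k, Tendsto
      (fun n : ℕ => ((pref S n).count a : ℝ) / n) atTop (nhds (α a)))
    (K : List (Fin k) → ℕ) :
    (liminf (fun n : ℕ => ENNReal.ofReal ((K (pref S n) : ℝ) / selfInfo β (pref S n))) atTop =
      liminf (fun n : ℕ => ENNReal.ofReal ((K (pref S n) : ℝ) / ((n : ℝ) * Real.logb 2 k))) atTop /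
        ENNReal.ofReal
          ((∑ a, α a * Real.logb 2 (α a)⁻¹) / Real.logb 2 k +
           (∑ a, α a * Real.logb 2 (α a / β a)) / Real.logb 2 k)) ∧
    (limsup (fun n : ℕ => ENNReal.ofReal ((K (pref S n) : ℝ) / selfInfo β (pref S n))) atTop =
      limsup (fun n : ℕ => ENNReal.ofReal ((K (pref S n) : ℝ) / ((n : ℝ) * Real.logb 2 k))) atTop /
        ENNReal.ofReal
          ((∑ a, α a * Real.logb 2 (α a)⁻¹) / Real.logb 2 k +
           (∑ a, α a * Real.logb 2 (α a / β a)) / Real.logb 2 k)) := by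
  have : Nontrivial (Fin k) := Fin.nontrivial_iff_two_le.mpr hk
  set L := Real.logb 2 k
  have hL : 0 < L := Real.logb_pos one_lt_two (by exact_mod_cast hk)
  have hcross : 0 < ∑ a, α a * Real.logb 2 (β a)⁻¹ :=
    sum_mul_logb_inv_pos hαpos hβpos (lt_one_of_sum_eq_one hβpos hβ1)
  have hnL : ∀ᶠ n : ℕ in atTop, 0 < (n : ℝ) * L :=
    (eventually_gt_atTop 0).mono fun n hn => by positivity
  have hrate : Tendsto (fun n : ℕ => selfInfo β (pref S n) / ((n : ℝ) * L)) atTop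
      (𝓝 ((∑ a, α a * Real.logb 2 (β a)⁻¹) / L)) := by
    simpa only [div_div] using (tendsto_selfInfo_pref_div β hfreq).div_const L
  rw [← add_div, sum_mul_logb_inv_add_sum_mul_logb_div (fun a => (hαpos a).ne')
    (fun a => (hβpos a).ne')]
  exact ⟨liminf_ofReal_div_eq_div_of_tendsto (div_pos hcross hL) hnL hrate,
    limsup_ofReal_div_eq_div_of_tendsto (div_pos hcross hL) hnL hrate⟩

/-- Lemma 3.3: if `α, β` are computable positive probability
measures and `S ∈ FREQ^α`, then `dim^β(S) = dim(S)/(H_k(α)+D_k(α‖β))` and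
`Dim^β(S) = Dim(S)/(H_k(α)+D_k(α‖β))`, where the constructive (strong)
β-dimensions are defined via their Kolmogorov-complexity characterizations
`dim^β(S) = liminf K(w)/I_β(w)`, etc. (computed in `ℝ≥0∞`). -/
theorem constructive_dimension_freq_formula
    (k : ℕ) (hk : 2 ≤ k)
    (α β : Fin k → ℝ) (hαpos : ∀ a, 0 < α a) (hβpos : ∀ a, 0 < β a)
    (hα1 : ∑ a, α a = 1) (hβ1 : ∑ a, β a = 1)
    (hαcomp : ComputableMeasure α) (hβcomp : ComputableMeasure β)
    (S : ℕ → Fin k)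
    (hfreq : ∀ a : Fin k, Tendsto
      (fun n : ℕ => ((pref S n).count a : ℝ) / n) atTop (nhds (α a)))
    (K : List (Fin k) → ℕ) :
    (liminf (fun n : ℕ => ENNReal.ofReal ((K (pref S n) : ℝ) / selfInfo β (pref S n))) atTop =
      liminf (fun n : ℕ => ENNReal.ofReal ((K (pref S n) : ℝ) / ((n : ℝ) * Real.logb 2 k))) atTop /
        ENNReal.ofReal
          ((∑ a, α a * Real.logb 2 (α a)⁻¹) / Real.logb 2 k +
           (∑ a, α a * Real.logb 2 (α a / β a)) / Real.logb 2 k)) ∧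
    (limsup (fun n : ℕ => ENNReal.ofReal ((K (pref S n) : ℝ) / selfInfo β (pref S n))) atTop =
      limsup (fun n : ℕ => ENNReal.ofReal ((K (pref S n) : ℝ) / ((n : ℝ) * Real.logb 2 k))) atTop /
        ENNReal.ofReal
          ((∑ a, α a * Real.logb 2 (α a)⁻¹) / Real.logb 2 k +
           (∑ a, α a * Real.logb 2 (α a / β a)) / Real.logb 2 k)) :=
  constructive_dimension_freq_formula_general k hk α β hαpos hβpos hβ1 S hfreq K
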